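/- Let X be a measurable space and S a standard Borel space, let μ be a probability measure on X, let κ be a Markov kernel from X to S, and let ν = μ.bind κ be the mixture marginal of κ under μ. Then for every probability measure r on S, ∫ KL(κ(x) ‖ ν) dμ(x) ≤ ∫ KL(κ(x) ‖ r) dμ(x), i.e., the mutual information between input and latent representation is upper bounded by the expected KL divergence of the encoder to any fixed variational prior r. -/

import Mathlib

open MeasureTheory ProbabilityTheory
open scoped ENNReal NNReal

open scoped Classical in
/-- Kullback–Leibler divergence between measures, as in Mathlib's
`InformationTheory.klDiv` (absent from this Mathlib version). -/
noncomputable def klDiv {α : Type*} [MeasurableSpace α] (μ ν : Measure α) : ℝ≥0∞ :=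
  if μ ≪ ν ∧ Integrable (llr μ ν) μ then ENNReal.ofReal (∫ x, llr μ ν x ∂μ) else ⊤

/-! Both sides are Kullback–Leibler divergences of the joint law `π = μ ⊗ₘ κ` on `X × S`: the left
one against `μ ⊗ ν`, the right one against `μ ⊗ r`, where `ν = μ.bind κ` is the second marginal of
`π`. Because `μ ⊗ ν` has density `dν/dr ∘ snd` with respect to `μ ⊗ r`, the log-likelihood ratio
splits as `llr π (μ ⊗ r) = llr π (μ ⊗ ν) + llr ν r ∘ snd`, and integrating against `π` gives
`KL(π ‖ μ ⊗ r) = KL(π ‖ μ ⊗ ν) + KL(ν ‖ r) ≥ KL(π ‖ μ ⊗ ν)` by Gibbs' inequality. Integrability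
of the two summands comes for free: the negative part of a log-likelihood ratio `llr μ ν` is
bounded by `dν/dμ`, which is always integrable. -/

namespace MeasureTheory

section General

variable {α : Type*} [MeasurableSpace α]

lemma neg_toReal_rnDeriv_le_llr {μ ν : Measure α} [SigmaFinite μ] [SigmaFinite ν]
    (hμν : μ ≪ ν) : ∀ᵐ x ∂μ, -(ν.rnDeriv μ x).toReal ≤ llr μ ν x := by
  filter_upwards [neg_llr hμν] with x hx
  have hneg : llr μ ν x = -llr ν μ x := by rw [← hx, Pi.neg_apply, neg_neg]
  rw [hneg, neg_le_neg_iff]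
  exact Real.log_le_self ENNReal.toReal_nonneg

lemma Integrable.left_of_add_of_ae_le {μ : Measure α} {f g u v : α → ℝ}
    (hfg : Integrable (fun x ↦ f x + g x) μ) (hf : AEStronglyMeasurable f μ)
    (hu : Integrable u μ) (hv : Integrable v μ) (huf : u ≤ᵐ[μ] f) (hvg : v ≤ᵐ[μ] g) :
    Integrable f μ :=
  integrable_of_le_of_le (g₂ := fun x ↦ f x + g x - v x) hf huf
    (by filter_upwards [hvg] with x hx; linarith) hu (hfg.sub hv)

lemma Measure.AbsolutelyContinuous.withDensity_of_ae_ne_zero {π Q : Measure α} {f : α → ℝ≥0∞}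
    (hf : Measurable f) (hπQ : π ≪ Q) (hπf : ∀ᵐ x ∂π, f x ≠ 0) : π ≪ Q.withDensity f := by
  set s : Set α := {x | f x ≠ 0}
  have hs : MeasurableSet s := (measurableSet_singleton 0).preimage hf |>.compl
  have hQs : (Q.restrict s).withDensity f ≪ Q.withDensity f := by
    rw [← restrict_withDensity hs f]
    exact Measure.absolutelyContinuous_of_le Measure.restrict_le_self
  rw [← Measure.restrict_eq_self_of_ae_mem (s := s) hπf]
  exact (hπQ.restrict s).trans
    ((withDensity_absolutelyContinuous' hf.aemeasurable (ae_restrict_mem hs)).trans hQs)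

lemma llr_ae_eq_llr_add_llr {π P Q : Measure α} [SigmaFinite π] [SigmaFinite P] [SigmaFinite Q]
    (hπP : π ≪ P) (hPQ : P ≪ Q) : llr π Q =ᵐ[π] llr π P + llr P Q := by
  filter_upwards [(hπP.trans hPQ).ae_le (Measure.rnDeriv_mul_rnDeriv (κ := Q) hπP),
    Measure.rnDeriv_pos hπP, hπP.ae_le (Measure.rnDeriv_lt_top π P),
    hπP.ae_le (Measure.rnDeriv_pos hPQ), (hπP.trans hPQ).ae_le (Measure.rnDeriv_lt_top P Q)]
    with x hmul hπP_pos hπP_lt hPQ_pos hPQ_lt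
  rw [Pi.add_apply, llr, llr, llr, ← hmul, Pi.mul_apply, ENNReal.toReal_mul,
    Real.log_mul (ENNReal.toReal_pos hπP_pos.ne' hπP_lt.ne).ne'
      (ENNReal.toReal_pos hPQ_pos.ne' hPQ_lt.ne).ne']

end General

section Prod

variable {X S : Type*} [MeasurableSpace X] [MeasurableSpace S]

lemma Measure.prod_eq_withDensity_rnDeriv_snd (μ : Measure X) [SFinite μ] {ν r : Measure S}
    [SigmaFinite ν] [SigmaFinite r] (hνr : ν ≪ r) :
    μ.prod ν = (μ.prod r).withDensity fun p ↦ ν.rnDeriv r p.2 := by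
  rw [← prod_withDensity_right (Measure.measurable_rnDeriv ν r),
    Measure.withDensity_rnDeriv_eq ν r hνr]

lemma llr_prod_ae_eq_llr_snd (μ : Measure X) [SigmaFinite μ] {ν r : Measure S}
    [SigmaFinite ν] [SigmaFinite r] (hνr : ν ≪ r) :
    llr (μ.prod ν) (μ.prod r) =ᵐ[μ.prod r] fun p ↦ llr ν r p.2 := by
  have h := Measure.rnDeriv_withDensity (μ.prod r) (f := fun p ↦ ν.rnDeriv r p.2)
    ((Measure.measurable_rnDeriv ν r).comp measurable_snd)
  rw [← Measure.prod_eq_withDensity_rnDeriv_snd μ hνr] at h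
  filter_upwards [h] with p hp
  rw [llr, hp, llr]

variable {π : Measure (X × S)} {μ : Measure X} [IsProbabilityMeasure μ] {r : Measure S}
  [IsFiniteMeasure r]

lemma Measure.AbsolutelyContinuous.snd_of_prod (hπr : π ≪ μ.prod r) : π.snd ≪ r := by
  simpa [Measure.snd] using hπr.map measurable_snd

lemma Measure.AbsolutelyContinuous.prod_snd [IsFiniteMeasure π] (hπr : π ≪ μ.prod r) :
    π ≪ μ.prod π.snd := by
  have hνr := hπr.snd_of_prod
  rw [Measure.prod_eq_withDensity_rnDeriv_snd μ hνr]
  exact hπr.withDensity_of_ae_ne_zero ((Measure.measurable_rnDeriv _ r).comp measurable_snd)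
    (ae_of_ae_map measurable_snd.aemeasurable ((Measure.rnDeriv_pos hνr).mono fun y hy ↦ hy.ne'))

lemma llr_ae_eq_llr_snd_add_llr_prod_snd [IsFiniteMeasure π] (hπr : π ≪ μ.prod r) :
    llr π (μ.prod r) =ᵐ[π] fun p ↦ llr π.snd r p.2 + llr π (μ.prod π.snd) p := by
  have hνr := hπr.snd_of_prod
  filter_upwards [llr_ae_eq_llr_add_llr hπr.prod_snd (Measure.AbsolutelyContinuous.rfl.prod hνr),
    hπr.ae_le (llr_prod_ae_eq_llr_snd μ hνr)] with p hp hp'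
  rw [hp, Pi.add_apply, hp', add_comm]

end Prod

end MeasureTheory

namespace ProbabilityTheory

variable {X S : Type*} [MeasurableSpace X] [MeasurableSpace S]
  [MeasurableSpace.CountableOrCountablyGenerated X S]

lemma rnDeriv_compProd_ae_eq_kernel_rnDeriv {μ : Measure X} [IsFiniteMeasure μ]
    {κ η : Kernel X S} [IsFiniteKernel κ] [IsFiniteKernel η] (hac : ∀ᵐ x ∂μ, κ x ≪ η x) :
    (μ ⊗ₘ κ).rnDeriv (μ ⊗ₘ η) =ᵐ[μ ⊗ₘ η] fun p ↦ Kernel.rnDeriv κ η p.1 p.2 := by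
  have hκ : μ ⊗ₘ κ = (μ ⊗ₘ η).withDensity fun p ↦ Kernel.rnDeriv κ η p.1 p.2 := by
    rw [← Measure.compProd_withDensity (Kernel.measurable_rnDeriv κ η)]
    refine Measure.compProd_congr ?_
    filter_upwards [hac] with x hx
    conv_lhs => rw [← Kernel.rnDeriv_add_singularPart κ η]
    rw [add_apply, (Kernel.singularPart_eq_zero_iff_absolutelyContinuous κ η x).2 hx, add_zero]
  rw [hκ]
  exact Measure.rnDeriv_withDensity _ (Kernel.measurable_rnDeriv κ η)

end ProbabilityTheory

namespace InformationTheory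

lemma klDiv_prod_snd_le {X S : Type*} [MeasurableSpace X] [MeasurableSpace S]
    (π : Measure (X × S)) [IsProbabilityMeasure π] (μ : Measure X) [IsProbabilityMeasure μ]
    (r : Measure S) [IsProbabilityMeasure r] :
    klDiv π (μ.prod π.snd) ≤ klDiv π (μ.prod r) := by
  by_cases hfin : klDiv π (μ.prod r) = ∞
  · exact hfin ▸ le_top
  obtain ⟨hπr, hint⟩ := klDiv_ne_top_iff.1 hfin
  have hllr := llr_ae_eq_llr_snd_add_llr_prod_snd hπr
  set ν := π.snd
  have hνr : ν ≪ r := hπr.snd_of_prod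
  have hint_snd : Integrable (fun p ↦ llr ν r p.2) π :=
    Integrable.left_of_add_of_ae_le (hint.congr hllr)
      ((measurable_llr ν r).comp measurable_snd).aestronglyMeasurable
      (Measure.integrable_toReal_rnDeriv.neg.comp_measurable measurable_snd)
      Measure.integrable_toReal_rnDeriv.neg
      (ae_of_ae_map measurable_snd.aemeasurable (neg_toReal_rnDeriv_le_llr hνr))
      (neg_toReal_rnDeriv_le_llr hπr.prod_snd)
  have hint_ν : Integrable (llr ν r) ν :=
    (integrable_map_measure (measurable_llr ν r).aestronglyMeasurable
      measurable_snd.aemeasurable).2 hint_snd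
  have hint_prod : Integrable (llr π (μ.prod ν)) π :=
    (hint.sub hint_snd).congr (by filter_upwards [hllr] with p hp; simp [hp])
  have hgibbs : 0 ≤ ∫ y, llr ν r y ∂ν := by
    simpa using integral_llr_add_sub_measure_univ_nonneg hνr hint_ν
  have hsplit :
      ∫ p, llr π (μ.prod r) p ∂π = ∫ y, llr ν r y ∂ν + ∫ p, llr π (μ.prod ν) p ∂π := by
    have hmap : ∫ y, llr ν r y ∂ν = ∫ p, llr ν r p.2 ∂π :=
      integral_map measurable_snd.aemeasurable (measurable_llr ν r).aestronglyMeasurable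
    rw [integral_congr_ae hllr, integral_add hint_snd hint_prod, hmap]
  rw [klDiv_of_ac_of_integrable hπr.prod_snd hint_prod, klDiv_of_ac_of_integrable hπr hint]
  simp only [probReal_univ, hsplit]
  exact ENNReal.ofReal_le_ofReal (by linarith)

lemma lintegral_klDiv_eq_klDiv_compProd {X S : Type*} [MeasurableSpace X] [MeasurableSpace S]
    [MeasurableSpace.CountableOrCountablyGenerated X S] (μ : Measure X) [IsFiniteMeasure μ]
    (κ η : Kernel X S) [IsFiniteKernel κ] [IsFiniteKernel η] :
    ∫⁻ x, klDiv (κ x) (η x) ∂μ = klDiv (μ ⊗ₘ κ) (μ ⊗ₘ η) := by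
  by_cases hac : ∀ᵐ x ∂μ, κ x ≪ η x
  · have hkl : (fun p ↦ ENNReal.ofReal (klFun ((μ ⊗ₘ κ).rnDeriv (μ ⊗ₘ η) p).toReal))
        =ᵐ[μ ⊗ₘ η] fun p ↦ ENNReal.ofReal (klFun (Kernel.rnDeriv κ η p.1 p.2).toReal) := by
      filter_upwards [rnDeriv_compProd_ae_eq_kernel_rnDeriv hac] with p hp
      rw [hp]
    rw [klDiv_eq_lintegral_klFun_of_ac (Measure.absolutelyContinuous_compProd_right_iff.2 hac),
      lintegral_congr_ae hkl, Measure.lintegral_compProd (by fun_prop)]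
    refine lintegral_congr_ae ?_
    filter_upwards [hac] with x hx
    rw [klDiv_eq_lintegral_klFun_of_ac hx]
    refine lintegral_congr_ae ?_
    filter_upwards [Kernel.rnDeriv_eq_rnDeriv_measure (κ := κ) (η := η) (a := x)] with y hy
    rw [hy]
  · -- No measurability of `x ↦ klDiv (κ x) (η x)` is needed: it is `∞` on a non-null set.
    rw [klDiv_of_not_ac (by rwa [Measure.absolutelyContinuous_compProd_right_iff]), eq_top_iff]
    set A := {x | ¬ κ x ≪ η x}
    have hA : MeasurableSet A := (Kernel.measurableSet_absolutelyContinuous κ η).compl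
    have hμA : μ A ≠ 0 := fun h ↦ hac (ae_iff.2 h)
    calc ∞ = ∫⁻ x, A.indicator (fun _ ↦ ∞) x ∂μ := by
          rw [lintegral_indicator_const hA, ENNReal.top_mul hμA]
      _ ≤ ∫⁻ x, klDiv (κ x) (η x) ∂μ := by
          refine lintegral_mono fun x ↦ ?_
          by_cases hx : x ∈ A
          · simp [hx, klDiv_of_not_ac (show ¬ κ x ≪ η x from hx)]
          · simp [hx]

end InformationTheory

-- Mathlib's `klDiv` carries the correction term `ν.real univ - μ.real univ`, which vanishes here.
lemma klDiv_eq_informationTheory_klDiv {α : Type*} [MeasurableSpace α] {μ ν : Measure α}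
    (h : μ Set.univ = ν Set.univ) : klDiv μ ν = InformationTheory.klDiv μ ν := by
  by_cases hμν : μ ≪ ν ∧ Integrable (llr μ ν) μ
  · rw [klDiv, if_pos hμν, InformationTheory.klDiv_of_ac_of_integrable hμν.1 hμν.2,
      measureReal_def, measureReal_def, h, add_sub_cancel_right]
  · rw [klDiv, if_neg hμν]
    rcases not_and_or.1 hμν with hac | hint
    · simp [hac]
    · simp [hint]

lemma lintegral_klDiv_eq_klDiv_prod {X S : Type*} [MeasurableSpace X] [MeasurableSpace S]
    [MeasurableSpace.CountableOrCountablyGenerated X S] (μ : Measure X) [IsFiniteMeasure μ]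
    (κ : Kernel X S) [IsMarkovKernel κ] (ρ : Measure S) [IsProbabilityMeasure ρ] :
    ∫⁻ x, klDiv (κ x) ρ ∂μ = InformationTheory.klDiv (μ ⊗ₘ κ) (μ.prod ρ) := by
  rw [← Measure.compProd_const, ← InformationTheory.lintegral_klDiv_eq_klDiv_compProd]
  congr with x
  exact klDiv_eq_informationTheory_klDiv (by simp)

/-- The mutual information between input and latent representation, expressed as the
expected KL divergence of the encoder kernel to its mixture marginal `ν = μ.bind κ`,
is upper bounded by the expected KL divergence to any fixed variational prior `r`. -/
theorem lintegral_klDiv_bind_le_lintegral_klDiv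
    {X S : Type*} [MeasurableSpace X] [MeasurableSpace S] [StandardBorelSpace S]
    (μ : Measure X) [IsProbabilityMeasure μ]
    (κ : Kernel X S) [IsMarkovKernel κ]
    (r : Measure S) [IsProbabilityMeasure r] :
    ∫⁻ x, klDiv (κ x) (μ.bind ⇑κ) ∂μ ≤ ∫⁻ x, klDiv (κ x) r ∂μ := by
  have hν : μ.bind ⇑κ = (μ ⊗ₘ κ).snd := (Measure.snd_compProd μ κ).symm
  rw [lintegral_klDiv_eq_klDiv_prod, lintegral_klDiv_eq_klDiv_prod, hν]
  exact InformationTheory.klDiv_prod_snd_le (μ ⊗ₘ κ) μ r
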